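/- arXiv:0707.3248 — 3 statements merged into one kernel-verified Lean document; each statement's English description precedes it below -/
import Mathlib

section
/- Let L ≥ 1, σ_l > 0, h_l > 0 for l = 1,…,L, and fix a > 0. Consider minimizing Σ_{l=1}^L σ_l² h_l² α_l² subject to 0 ≤ α_l ≤ α_max,l and Σ_l h_l α_l = a, where the indices are ordered so that σ_1² h_1 α_max,1 ≤ … ≤ σ_L² h_L α_max,L. Suppose a ∈ [a_k, a_{k+1}] where a_k = Σ_{l≤k} h_l α_max,l + σ_k² h_k α_max,k Σ_{l>k} σ_l^{-2} (with a_0 = 0). Then the choice α_l = α_max,l for l ≤ k and α_l = (1/(σ_l² h_l)) · (a − Σ_{m≤k} h_m α_max,m)/(Σ_{m>k} σ_m^{-2}) for l > k is feasible and achieves the minimum value V(a) = Σ_{l≤k} σ_l² h_l² α_max,l² + (a − Σ_{l≤k} h_l α_max,l)² / (Σ_{l>k} σ_l^{-2}). -/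
open Finset

/-!
Let `c = (a - ∑_{l<k} h_l α_max,l) / ∑_{l≥k} σ_l⁻²`. The candidate saturates the indices
`l < k` and sets `σ_l² h_l² α_l = c h_l` on the others (water-filling at level `c`). Since
`a_{k+1} = ∑_{l<k} h_l α_max,l + σ_k² h_k α_max,k ∑_{l≥k} σ_l⁻²`, the hypothesis
`a_k ≤ a ≤ a_{k+1}` says exactly that `σ_{k-1}² h_{k-1} α_max,k-1 ≤ c ≤ σ_k² h_k α_max,k`
(`0 ≤ c` when `k = 0`). With the ordering this gives feasibility and the KKT conditions with
multiplier `c`, which are sufficient for a separable convex quadratic.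
-/

/-- Convexity gives `w y² ≥ w x² + 2 w x (y - x)`; the KKT alternative bounds `2 w x (y - x)`
below by `2 c h (y - x)`, and these sum to zero. -/
theorem sum_mul_sq_le_of_kkt {ι : Type*} [Fintype ι] {w h u x y : ι → ℝ} {c : ℝ}
    (hw : ∀ i, 0 ≤ w i)
    (hx : ∀ i, w i * x i = c * h i ∨ (x i = u i ∧ w i * u i ≤ c * h i))
    (hy : ∀ i, y i ≤ u i) (hxy : ∑ i, h i * x i = ∑ i, h i * y i) :
    ∑ i, w i * x i ^ 2 ≤ ∑ i, w i * y i ^ 2 := by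
  have hterm : ∀ i, w i * x i ^ 2 + 2 * c * (h i * y i - h i * x i) ≤ w i * y i ^ 2 := by
    intro i
    have hsq := mul_nonneg (hw i) (sq_nonneg (y i - x i))
    rcases hx i with hfree | ⟨hsat, hle⟩
    · linear_combination hsq + 2 * (x i - y i) * hfree
    · rw [hsat] at hsq ⊢
      linear_combination hsq + 2 * mul_nonneg (sub_nonneg.2 hle) (sub_nonneg.2 (hy i))
  calc ∑ i, w i * x i ^ 2
      = ∑ i, (w i * x i ^ 2 + 2 * c * (h i * y i - h i * x i)) := by
        simp only [sum_add_distrib, ← mul_sum, sum_sub_distrib, hxy, sub_self, mul_zero,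
          add_zero]
    _ ≤ ∑ i, w i * y i ^ 2 := sum_le_sum fun i _ => hterm i

section WaterFilling

variable {ι : Type*} (p : ι → Prop) [DecidablePred p] {σ h u x : ι → ℝ} {c : ℝ}

theorem sum_mul_waterFill [Fintype ι] (hσ : ∀ l, σ l ≠ 0) (hh : ∀ l, h l ≠ 0)
    (hx : ∀ l, x l = if p l then u l else 1 / (σ l ^ 2 * h l) * c) :
    ∑ l, h l * x l =
      ∑ l ∈ univ.filter p, h l * u l +
        c * ∑ l ∈ univ.filter (fun l => ¬ p l), (σ l ^ 2)⁻¹ := by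
  rw [← sum_filter_add_sum_filter_not univ p, mul_sum]
  congr 1 <;> refine sum_congr rfl fun l hl => ?_ <;> have hpl := (mem_filter.1 hl).2
  · rw [hx, if_pos hpl]
  · rw [hx, if_neg hpl]
    field_simp [hσ l, hh l]

theorem sum_mul_sq_waterFill [Fintype ι] (hσ : ∀ l, σ l ≠ 0) (hh : ∀ l, h l ≠ 0)
    (hx : ∀ l, x l = if p l then u l else 1 / (σ l ^ 2 * h l) * c) :
    ∑ l, σ l ^ 2 * h l ^ 2 * x l ^ 2 =
      ∑ l ∈ univ.filter p, σ l ^ 2 * h l ^ 2 * u l ^ 2 +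
        c ^ 2 * ∑ l ∈ univ.filter (fun l => ¬ p l), (σ l ^ 2)⁻¹ := by
  rw [← sum_filter_add_sum_filter_not univ p, mul_sum]
  congr 1 <;> refine sum_congr rfl fun l hl => ?_ <;> have hpl := (mem_filter.1 hl).2
  · rw [hx, if_pos hpl]
  · rw [hx, if_neg hpl]
    field_simp [hσ l, hh l]

theorem waterFill_mem_Icc (hσ : ∀ l, 0 < σ l) (hh : ∀ l, 0 < h l) (hu : ∀ l, 0 ≤ u l)
    (hc : 0 ≤ c) (hcu : ∀ l, ¬ p l → c ≤ σ l ^ 2 * h l * u l)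
    (hx : ∀ l, x l = if p l then u l else 1 / (σ l ^ 2 * h l) * c) (l : ι) :
    0 ≤ x l ∧ x l ≤ u l := by
  rw [hx]
  split_ifs with hpl
  · exact ⟨hu l, le_rfl⟩
  · have hw : 0 < σ l ^ 2 * h l := by have := hσ l; have := hh l; positivity
    rw [one_div, inv_mul_le_iff₀ hw]
    exact ⟨by positivity, by linarith [hcu l hpl]⟩

theorem waterFill_kkt (hσ : ∀ l, σ l ≠ 0) (hh : ∀ l, 0 < h l)
    (hcu : ∀ l, p l → σ l ^ 2 * h l * u l ≤ c)
    (hx : ∀ l, x l = if p l then u l else 1 / (σ l ^ 2 * h l) * c) (l : ι) :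
    σ l ^ 2 * h l ^ 2 * x l = c * h l ∨
      (x l = u l ∧ σ l ^ 2 * h l ^ 2 * u l ≤ c * h l) := by
  rw [hx]
  split_ifs with hpl
  · right
    exact ⟨rfl, by nlinarith [hcu l hpl, hh l]⟩
  · left
    field_simp [hσ l, (hh l).ne']

end WaterFilling
section Breakpoints

variable {L : ℕ} {k : ℕ}

theorem sum_filter_lt_succ {M : Type*} [AddCommMonoid M] (f : Fin L → M) (hk : k < L) :
    ∑ l ∈ univ.filter (fun l : Fin L => l.val < k + 1), f l =
      ∑ l ∈ univ.filter (fun l : Fin L => l.val < k), f l + f ⟨k, hk⟩ := by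
  rw [← add_comm (f ⟨k, hk⟩), ← sum_insert (by simp)]
  congr 1
  ext l
  simp only [mem_filter, mem_univ, true_and, mem_insert, Fin.ext_iff]
  omega

theorem sum_filter_le_eq {M : Type*} [AddCommMonoid M] (f : Fin L → M) (hk : k < L) :
    ∑ l ∈ univ.filter (fun l : Fin L => k ≤ l.val), f l =
      f ⟨k, hk⟩ + ∑ l ∈ univ.filter (fun l : Fin L => k + 1 ≤ l.val), f l := by
  rw [← sum_insert (by simp)]
  congr 1
  ext l
  simp only [mem_filter, mem_univ, true_and, mem_insert, Fin.ext_iff]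
  omega

variable (σ h αmax : Fin L → ℝ)

theorem breakpoint_succ (hk : k < L) (hσ : σ ⟨k, hk⟩ ≠ 0) :
    ∑ l ∈ univ.filter (fun l : Fin L => l.val < k + 1), h l * αmax l +
        σ ⟨k, hk⟩ ^ 2 * h ⟨k, hk⟩ * αmax ⟨k, hk⟩ *
          ∑ l ∈ univ.filter (fun l : Fin L => k + 1 ≤ l.val), (σ l ^ 2)⁻¹ =
      ∑ l ∈ univ.filter (fun l : Fin L => l.val < k), h l * αmax l +
        σ ⟨k, hk⟩ ^ 2 * h ⟨k, hk⟩ * αmax ⟨k, hk⟩ *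
          ∑ l ∈ univ.filter (fun l : Fin L => k ≤ l.val), (σ l ^ 2)⁻¹ := by
  rw [sum_filter_lt_succ _ hk, sum_filter_le_eq _ hk]
  field_simp
  ring

variable {σ h αmax} {a : ℝ}

theorem waterLevel_le_of_le_breakpoint_succ (hσ : ∀ l, σ l ≠ 0)
    (horder : ∀ i j : Fin L, i ≤ j → σ i ^ 2 * h i * αmax i ≤ σ j ^ 2 * h j * αmax j)
    (hk : k < L) (hT : 0 < ∑ l ∈ univ.filter (fun l : Fin L => k ≤ l.val), (σ l ^ 2)⁻¹)
    (ha : a ≤ ∑ l ∈ univ.filter (fun l : Fin L => l.val < k + 1), h l * αmax l +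
        σ ⟨k, hk⟩ ^ 2 * h ⟨k, hk⟩ * αmax ⟨k, hk⟩ *
          ∑ l ∈ univ.filter (fun l : Fin L => k + 1 ≤ l.val), (σ l ^ 2)⁻¹)
    (l : Fin L) (hl : k ≤ l.val) :
    (a - ∑ l ∈ univ.filter (fun l : Fin L => l.val < k), h l * αmax l) /
        ∑ l ∈ univ.filter (fun l : Fin L => k ≤ l.val), (σ l ^ 2)⁻¹ ≤
      σ l ^ 2 * h l * αmax l := by
  rw [breakpoint_succ σ h αmax hk (hσ _)] at ha
  rw [div_le_iff₀ hT]
  refine (sub_le_iff_le_add'.2 ha).trans (mul_le_mul_of_nonneg_right ?_ hT.le)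
  exact horder _ _ (Fin.le_def.2 hl)

theorem le_waterLevel_of_breakpoint_le (hh : ∀ l, 0 ≤ h l) (hαmax : ∀ l, 0 ≤ αmax l)
    (horder : ∀ i j : Fin L, i ≤ j → σ i ^ 2 * h i * αmax i ≤ σ j ^ 2 * h j * αmax j)
    (hk : k ≤ L) (hT : 0 < ∑ l ∈ univ.filter (fun l : Fin L => k ≤ l.val), (σ l ^ 2)⁻¹)
    (ha : (if hk0 : k = 0 then 0 else
      ∑ l ∈ univ.filter (fun l : Fin L => l.val < k), h l * αmax l +
        σ ⟨k - 1, by omega⟩ ^ 2 * h ⟨k - 1, by omega⟩ * αmax ⟨k - 1, by omega⟩ *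
          ∑ l ∈ univ.filter (fun l : Fin L => k ≤ l.val), (σ l ^ 2)⁻¹) ≤ a) :
    0 ≤ (a - ∑ l ∈ univ.filter (fun l : Fin L => l.val < k), h l * αmax l) /
        ∑ l ∈ univ.filter (fun l : Fin L => k ≤ l.val), (σ l ^ 2)⁻¹ ∧
      ∀ l : Fin L, l.val < k → σ l ^ 2 * h l * αmax l ≤
        (a - ∑ l ∈ univ.filter (fun l : Fin L => l.val < k), h l * αmax l) /
          ∑ l ∈ univ.filter (fun l : Fin L => k ≤ l.val), (σ l ^ 2)⁻¹ := by
  rcases k with _ | j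
  · simp only [dif_pos] at ha
    refine ⟨?_, fun l hl => absurd hl (Nat.not_lt_zero _)⟩
    simp only [Nat.not_lt_zero, filter_false, sum_empty, sub_zero]
    exact div_nonneg ha hT.le
  · set last : Fin L := ⟨j, by omega⟩
    rw [dif_neg j.succ_ne_zero] at ha
    have hlast : σ last ^ 2 * h last * αmax last ≤
        (a - ∑ l ∈ univ.filter (fun l : Fin L => l.val < j + 1), h l * αmax l) /
          ∑ l ∈ univ.filter (fun l : Fin L => j + 1 ≤ l.val), (σ l ^ 2)⁻¹ := by
      rw [le_div_iff₀ hT]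
      exact le_sub_iff_add_le'.2 ha
    have hlast0 : 0 ≤ σ last ^ 2 * h last * αmax last := by
      have := hh last; have := hαmax last; positivity
    exact ⟨hlast0.trans hlast,
      fun l hl => (horder l last (Fin.le_def.2 (Nat.lt_succ_iff.1 hl))).trans hlast⟩

end Breakpoints

/-- water-filling solution of the box-constrained problem
minimize Σ σ_l²h_l²α_l² s.t. 0 ≤ α_l ≤ α_max,l and Σ h_lα_l = a, for
a ∈ [a_k, a_{k+1}] (sensors ordered by σ_l²h_lα_max,l). -/
theorem stmt_4 (L : ℕ) (σ h αmax : Fin L → ℝ)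
    (hσ : ∀ l, 0 < σ l) (hh : ∀ l, 0 < h l) (hαmax : ∀ l, 0 < αmax l)
    (horder : ∀ i j : Fin L, i ≤ j →
      (σ i)^2 * h i * αmax i ≤ (σ j)^2 * h j * αmax j)
    (a : ℝ) (k : ℕ) (hk : k < L)
    (A : ℕ → ℝ)
    (hA : ∀ m : ℕ, ∀ hm : m ≤ L, A m = if hm0 : m = 0 then 0 else
      (∑ l ∈ Finset.univ.filter (fun l : Fin L => l.val < m), h l * αmax l) +
      (σ ⟨m - 1, by omega⟩)^2 * h ⟨m - 1, by omega⟩ * αmax ⟨m - 1, by omega⟩ *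
        ∑ l ∈ Finset.univ.filter (fun l : Fin L => m ≤ l.val), ((σ l)^2)⁻¹)
    (halo : A k ≤ a) (hahi : a ≤ A (k + 1))
    (αopt : Fin L → ℝ)
    (hαopt : ∀ l : Fin L, αopt l = if l.val < k then αmax l else
      (1 / ((σ l)^2 * h l)) *
        ((a - ∑ m ∈ Finset.univ.filter (fun m : Fin L => m.val < k), h m * αmax m) /
          ∑ m ∈ Finset.univ.filter (fun m : Fin L => k ≤ m.val), ((σ m)^2)⁻¹)) :
    (∀ l, 0 ≤ αopt l ∧ αopt l ≤ αmax l) ∧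
    (∑ l, h l * αopt l = a) ∧
    (∑ l, (σ l)^2 * (h l)^2 * (αopt l)^2 =
      (∑ l ∈ Finset.univ.filter (fun l : Fin L => l.val < k),
          (σ l)^2 * (h l)^2 * (αmax l)^2) +
        (a - ∑ l ∈ Finset.univ.filter (fun l : Fin L => l.val < k), h l * αmax l)^2 /
          ∑ l ∈ Finset.univ.filter (fun l : Fin L => k ≤ l.val), ((σ l)^2)⁻¹) ∧
    (∀ α : Fin L → ℝ, (∀ l, 0 ≤ α l ∧ α l ≤ αmax l) → ∑ l, h l * α l = a →
      ∑ l, (σ l)^2 * (h l)^2 * (αopt l)^2 ≤ ∑ l, (σ l)^2 * (h l)^2 * (α l)^2) := by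
  have hσ0 : ∀ l, σ l ≠ 0 := fun l => (hσ l).ne'
  have hh0 : ∀ l, h l ≠ 0 := fun l => (hh l).ne'
  have hT : 0 < ∑ l ∈ univ.filter (fun l : Fin L => k ≤ l.val), ((σ l)^2)⁻¹ :=
    sum_pos (fun l _ => by have := hσ l; positivity) ⟨⟨k, hk⟩, by simp⟩
  have hfree :
      univ.filter (fun l : Fin L => ¬ l.val < k) = univ.filter (fun l => k ≤ l.val) := by
    simp only [not_lt]
  obtain ⟨hlevel0, hlevel_sat⟩ :=
    le_waterLevel_of_breakpoint_le (fun l => (hh l).le) (fun l => (hαmax l).le) horder hk.le hT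
      (hA k hk.le ▸ halo)
  have hlevel_free := waterLevel_le_of_le_breakpoint_succ hσ0 horder hk hT
    ((hA (k + 1) hk).trans (dif_neg k.succ_ne_zero) ▸ hahi)
  have hsum : ∑ l, h l * αopt l = a := by
    rw [sum_mul_waterFill _ hσ0 hh0 hαopt, hfree, div_mul_cancel₀ _ hT.ne']
    ring
  refine ⟨waterFill_mem_Icc _ hσ hh (fun l => (hαmax l).le) hlevel0
      (fun l hl => hlevel_free l (not_lt.1 hl)) hαopt, hsum, ?_,
    fun α hα hαa => sum_mul_sq_le_of_kkt (fun l => by positivity)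
      (waterFill_kkt _ hσ0 hh hlevel_sat hαopt) (fun l => (hα l).2) (hsum.trans hαa.symm)⟩
  rw [sum_mul_sq_waterFill _ hσ0 hh0 hαopt, hfree]
  field_simp
end

section
/- Suppose σ_l = σ, h_l = h, P_l = P, and α_max,l = α_max for all l = 1,…,L (symmetric case). Then the function f(α) = (Σ_l (σ h α_l)² + σ_MAC²)/(Σ_l h α_l)² over the box 0 ≤ α_l ≤ α_max (excluding α = 0) is minimized at α_l = α_max for all l, with minimum value (L σ² h² α_max² + σ_MAC²)/(L h α_max)². -/
open Finset

/-- By Cauchy–Schwarz `(∑ x)² ≤ #s · ∑ x²`, so the quotient is at least `a / #s + c / (∑ x)²`,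
and the second term is smallest when `∑ x` is as large as the box allows. -/
theorem le_div_sq_sum_of_forall_le {ι : Type*} (s : Finset ι) (x : ι → ℝ) {a c m : ℝ}
    (ha : 0 ≤ a) (hc : 0 ≤ c) (hx : ∀ i ∈ s, 0 ≤ x i ∧ x i ≤ m) (hpos : 0 < ∑ i ∈ s, x i) :
    (a * #s * m ^ 2 + c) / (#s * m) ^ 2 ≤ (a * ∑ i ∈ s, x i ^ 2 + c) / (∑ i ∈ s, x i) ^ 2 := by
  set S := ∑ i ∈ s, x i
  have hS_le : S ≤ #s * m := by
    simpa using sum_le_card_nsmul s x m fun i hi => (hx i hi).2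
  have hcauchy : S ^ 2 ≤ #s * ∑ i ∈ s, x i ^ 2 := sq_sum_le_card_mul_sum_sq
  have hSsq_le : S ^ 2 ≤ (#s * m) ^ 2 := pow_le_pow_left₀ hpos.le hS_le 2
  rw [div_le_div_iff₀ (pow_pos (hpos.trans_le hS_le) 2) (pow_pos hpos 2)]
  calc (a * #s * m ^ 2 + c) * S ^ 2 = a * #s * m ^ 2 * S ^ 2 + c * S ^ 2 := by ring
    _ ≤ a * #s * m ^ 2 * (#s * ∑ i ∈ s, x i ^ 2) + c * (#s * m) ^ 2 := by gcongr
    _ = (a * ∑ i ∈ s, x i ^ 2 + c) * (#s * m) ^ 2 := by ring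

theorem stmt_8_general (L : ℕ) (σ h αmax σMAC : ℝ)
    (hh : 0 < h)
    (f : (Fin L → ℝ) → ℝ)
    (hf : ∀ α, f α = (∑ l : Fin L, (σ * h * α l)^2 + σMAC^2) / (∑ l : Fin L, h * α l)^2) :
    f (fun _ => αmax) = (L * σ^2 * h^2 * αmax^2 + σMAC^2) / (L * h * αmax)^2 ∧
    ∀ α : Fin L → ℝ, (∀ l, 0 ≤ α l ∧ α l ≤ αmax) → α ≠ 0 →
      f (fun _ => αmax) ≤ f α := by
  have hval : f (fun _ => αmax) = (L * σ^2 * h^2 * αmax^2 + σMAC^2) / (L * h * αmax)^2 := by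
    rw [hf]
    simp only [sum_const, card_univ, Fintype.card_fin, nsmul_eq_mul]
    ring
  refine ⟨hval, fun α hbox hne => ?_⟩
  have hpos : 0 < ∑ l, h * α l := by
    obtain ⟨l, hl⟩ := Function.ne_iff.mp hne
    exact sum_pos' (fun i _ => mul_nonneg hh.le (hbox i).1)
      ⟨l, mem_univ l, mul_pos hh ((hbox l).1.lt_of_ne' hl)⟩
  have key := le_div_sq_sum_of_forall_le univ (fun l => h * α l) (sq_nonneg σ) (sq_nonneg σMAC)
    (fun l _ => ⟨mul_nonneg hh.le (hbox l).1, mul_le_mul_of_nonneg_left (hbox l).2 hh.le⟩) hpos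
  rw [hval, hf]
  convert key using 2
  · simp only [card_univ, Fintype.card_fin]; ring
  · simp only [card_univ, Fintype.card_fin]; ring
  · rw [mul_sum]; congr 1; exact sum_congr rfl fun l _ => by ring

/-- symmetric case: with identical sensors, f(α) =
(Σ(σhα_l)² + σ_MAC²)/(Σ hα_l)² over the box 0 ≤ α_l ≤ α_max (excluding α = 0)
is minimized at α_l = α_max for all l, with value (Lσ²h²α_max² + σ_MAC²)/(Lhα_max)². -/
theorem stmt_8 (L : ℕ) (hL : 1 ≤ L) (σ h αmax σMAC : ℝ)
    (hσ : 0 < σ) (hh : 0 < h) (hαmax : 0 < αmax) (hσMAC : 0 < σMAC)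
    (f : (Fin L → ℝ) → ℝ)
    (hf : ∀ α, f α = (∑ l : Fin L, (σ * h * α l)^2 + σMAC^2) / (∑ l : Fin L, h * α l)^2) :
    f (fun _ => αmax) = (L * σ^2 * h^2 * αmax^2 + σMAC^2) / (L * h * αmax)^2 ∧
    ∀ α : Fin L → ℝ, (∀ l, 0 ≤ α l ∧ α l ≤ αmax) → α ≠ 0 →
      f (fun _ => αmax) ≤ f α :=
  stmt_8_general L σ h αmax σMAC hh f hf
end

section
/- Fix σ > 0 and σ' > σ, and m₀ ≠ m₁. Let f_{i,σ} denote the density of N(m_i, σ²). Then for any convex C : (0,∞) → ℝ (with the relevant integrals finite), ∫ f_{0,σ'}(y) C(f_{1,σ'}(y)/f_{0,σ'}(y)) dy ≤ ∫ f_{0,σ}(y) C(f_{1,σ}(y)/f_{0,σ}(y)) dy. That is, increasing the common Gaussian noise variance cannot increase any Ali-Silvey (f-)divergence between the two hypotheses. -/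
/-!
Adding independent `N(0, w)` noise to an `N(m, v)` observation produces an `N(m, v + w)`
observation, so both densities at variance `v + w` arise from those at variance `v` through one
and the same Markov kernel: `k x y` is the `N(y, w)` density at `x`. Fibrewise Jensen for the
perspective `(p, q) ↦ p C(q / p)` of `C`, integrated over the output variable with Fubini, shows
that no Markov kernel increases a `C`-divergence. The noise density is bounded, which keeps every
fibre integral finite.
-/

open Real Set Function MeasureTheory ProbabilityTheory
open scoped NNReal

lemma ConvexOn.add_rightDeriv_mul_sub_le {S : Set ℝ} {f : ℝ → ℝ} (hf : ConvexOn ℝ S f)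
    {x y : ℝ} (hx : x ∈ interior S) (hy : y ∈ S) :
    f x + derivWithin f (Ioi x) x * (y - x) ≤ f y := by
  rcases lt_trichotomy y x with hyx | rfl | hxy
  · have h := (hf.slope_le_leftDeriv_of_mem_interior hy hx hyx).trans
      (hf.leftDeriv_le_rightDeriv_of_mem_interior hx)
    rw [slope_def_field, div_le_iff₀ (sub_pos.2 hyx)] at h
    linarith
  · simp
  · have h := hf.rightDeriv_le_slope_of_mem_interior hx hy hxy
    rw [slope_def_field, le_div_iff₀ (sub_pos.2 hxy)] at h
    linarith

section Jensen

variable {α : Type*} [MeasurableSpace α] {μ : Measure α}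

theorem ConvexOn.integral_mul_map_div_le {C : ℝ → ℝ} (hC : ConvexOn ℝ (Ioi 0) C)
    {w p q : α → ℝ} (hw : ∀ y, 0 ≤ w y) (hp : ∀ y, 0 < p y) (hq : ∀ y, 0 < q y)
    (hwp : Integrable (fun y ↦ w y * p y) μ) (hwq : Integrable (fun y ↦ w y * q y) μ)
    (hwC : Integrable (fun y ↦ w y * (p y * C (q y / p y))) μ)
    (hP : 0 < ∫ y, w y * p y ∂μ) (hQ : 0 < ∫ y, w y * q y ∂μ) :
    (∫ y, w y * p y ∂μ) * C ((∫ y, w y * q y ∂μ) / ∫ y, w y * p y ∂μ)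
      ≤ ∫ y, w y * (p y * C (q y / p y)) ∂μ := by
  set P := ∫ y, w y * p y ∂μ
  set Q := ∫ y, w y * q y ∂μ
  set s := derivWithin C (Ioi (Q / P)) (Q / P)
  have hx₀ : Q / P ∈ interior (Ioi (0 : ℝ)) := by
    rw [interior_Ioi]; exact div_pos hQ hP
  have supporting_line :
      ∀ y, p y * C (Q / P) + s * (q y - Q / P * p y) ≤ p y * C (q y / p y) := by
    intro y
    have h := hC.add_rightDeriv_mul_sub_le hx₀ (div_pos (hq y) (hp y))
    have hpy := (hp y).ne'
    calc p y * C (Q / P) + s * (q y - Q / P * p y)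
        = p y * (C (Q / P) + s * (q y / p y - Q / P)) := by field_simp
      _ ≤ p y * C (q y / p y) := mul_le_mul_of_nonneg_left h (hp y).le
  have affine : ∀ y, w y * (p y * C (Q / P) + s * (q y - Q / P * p y))
      = (C (Q / P) - s * (Q / P)) * (w y * p y) + s * (w y * q y) := fun y ↦ by ring
  have haff : Integrable (fun y ↦ w y * (p y * C (Q / P) + s * (q y - Q / P * p y))) μ := by
    simp_rw [affine]
    exact (hwp.const_mul _).add (hwq.const_mul _)
  calc P * C (Q / P) = ∫ y, w y * (p y * C (Q / P) + s * (q y - Q / P * p y)) ∂μ := by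
        simp_rw [affine]
        rw [integral_add (hwp.const_mul _) (hwq.const_mul _), integral_const_mul,
          integral_const_mul]
        field_simp
        ring
    _ ≤ ∫ y, w y * (p y * C (q y / p y)) ∂μ :=
        integral_mono haff hwC fun y ↦ mul_le_mul_of_nonneg_left (supporting_line y) (hw y)

end Jensen

noncomputable def fDiv {α : Type*} [MeasurableSpace α] (C : ℝ → ℝ) (μ : Measure α)
    (p q : α → ℝ) : ℝ :=
  ∫ y, p y * C (q y / p y) ∂μ

section DataProcessing

variable {α β : Type*} [MeasurableSpace α] [MeasurableSpace β] {μ : Measure α} {ν : Measure β}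
  [SFinite μ] [SFinite ν] {k : β → α → ℝ}

lemma integrable_prod_kernel_mul (hk : Measurable (uncurry k)) (hk_nonneg : ∀ y' y, 0 ≤ k y' y)
    (hk_one : ∀ y, ∫ y', k y' y ∂ν = 1) {g : α → ℝ} (hg : Integrable g μ) :
    Integrable (uncurry fun y' y ↦ k y' y * g y) (ν.prod μ) := by
  have hmeas : AEStronglyMeasurable (uncurry fun y' y ↦ k y' y * g y) (ν.prod μ) :=
    hk.aestronglyMeasurable.mul hg.aestronglyMeasurable.comp_snd
  refine (integrable_prod_iff' hmeas).2 ⟨ae_of_all _ fun y ↦ ?_, ?_⟩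
  · have hky : ∫ y', k y' y ∂ν ≠ 0 := by rw [hk_one]; exact one_ne_zero
    exact (Integrable.of_integral_ne_zero hky).mul_const (g y)
  · refine hg.norm.congr (ae_of_all _ fun y ↦ ?_)
    simp only [uncurry_apply_pair, norm_mul, Real.norm_of_nonneg (hk_nonneg _ _)]
    rw [integral_mul_const, hk_one, one_mul]

theorem fDiv_le_of_kernel {C : ℝ → ℝ} (hC : ConvexOn ℝ (Ioi 0) C) {M : ℝ}
    (hk : Measurable (uncurry k)) (hk_nonneg : ∀ y' y, 0 ≤ k y' y) (hk_le : ∀ y' y, k y' y ≤ M)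
    (hk_one : ∀ y, ∫ y', k y' y ∂ν = 1)
    {p q : α → ℝ} {p' q' : β → ℝ} (hp : ∀ y, 0 < p y) (hq : ∀ y, 0 < q y)
    (hp' : ∀ y', 0 < p' y') (hq' : ∀ y', 0 < q' y')
    (hpi : Integrable p μ) (hqi : Integrable q μ)
    (hkp : ∀ y', ∫ y, k y' y * p y ∂μ = p' y') (hkq : ∀ y', ∫ y, k y' y * q y ∂μ = q' y')
    (hint : Integrable (fun y ↦ p y * C (q y / p y)) μ)
    (hint' : Integrable (fun y' ↦ p' y' * C (q' y' / p' y')) ν) :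
    fDiv C ν p' q' ≤ fDiv C μ p q := by
  have hbdd : ∀ {g : α → ℝ}, Integrable g μ → ∀ y', Integrable (fun y ↦ k y' y * g y) μ :=
    fun hg y' ↦ hg.bdd_mul (hk.comp measurable_prodMk_left).aestronglyMeasurable
      (ae_of_all _ fun y ↦ (Real.norm_of_nonneg (hk_nonneg y' y)).trans_le (hk_le y' y))
  have jensen : ∀ y', p' y' * C (q' y' / p' y') ≤ ∫ y, k y' y * (p y * C (q y / p y)) ∂μ := by
    intro y'
    have h := hC.integral_mul_map_div_le (hk_nonneg y') hp hq (hbdd hpi y') (hbdd hqi y')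
      (hbdd hint y') ((hkp y').symm ▸ hp' y') ((hkq y').symm ▸ hq' y')
    rwa [hkp, hkq] at h
  have hF := integrable_prod_kernel_mul hk hk_nonneg hk_one hint
  calc fDiv C ν p' q' ≤ ∫ y', ∫ y, k y' y * (p y * C (q y / p y)) ∂μ ∂ν :=
        integral_mono hint' hF.integral_prod_left jensen
    _ = ∫ y, ∫ y', k y' y * (p y * C (q y / p y)) ∂ν ∂μ := integral_integral_swap hF
    _ = fDiv C μ p q := by
        simp_rw [integral_mul_const, hk_one, one_mul]
        rfl

end DataProcessing

lemma gaussianPDFReal_mul_gaussianPDFReal (m x y : ℝ) {v w : ℝ≥0} (hv : v ≠ 0) (hw : w ≠ 0) :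
    gaussianPDFReal y w x * gaussianPDFReal m v y
      = gaussianPDFReal m (v + w) x
        * gaussianPDFReal ((w * m + v * x) / (v + w)) (v * w / (v + w)) y := by
  have hv' : (0 : ℝ) < v := by positivity
  have hw' : (0 : ℝ) < w := by positivity
  simp only [gaussianPDFReal, NNReal.coe_add, NNReal.coe_mul, NNReal.coe_div]
  have hsqrt : √(2 * π * w) * √(2 * π * v)
      = √(2 * π * (v + w)) * √(2 * π * (v * w / (v + w))) := by
    rw [← sqrt_mul (by positivity), ← sqrt_mul (by positivity)]
    congr 1
    field_simp
  have hexp : -(x - y) ^ 2 / (2 * w) + -(y - m) ^ 2 / (2 * v)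
      = -(x - m) ^ 2 / (2 * (v + w))
        + -(y - (w * m + v * x) / (v + w)) ^ 2 / (2 * (v * w / (v + w))) := by
    field_simp
    ring
  rw [mul_mul_mul_comm, ← mul_inv, ← exp_add, hsqrt, hexp, mul_inv, exp_add, mul_mul_mul_comm]

lemma gaussianPDFReal_le_inv_sqrt (μ : ℝ) (v : ℝ≥0) (x : ℝ) :
    gaussianPDFReal μ v x ≤ (√(2 * π * v))⁻¹ := by
  refine mul_le_of_le_one_right (by positivity) (exp_le_one_iff.2 ?_)
  exact div_nonpos_of_nonpos_of_nonneg (neg_nonpos.2 (sq_nonneg _)) (by positivity)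

lemma integral_gaussianPDFReal_mul_gaussianPDFReal (m x : ℝ) {v w : ℝ≥0} (hv : v ≠ 0)
    (hw : w ≠ 0) :
    ∫ y, gaussianPDFReal y w x * gaussianPDFReal m v y = gaussianPDFReal m (v + w) x := by
  have hvw : v * w / (v + w) ≠ 0 := by positivity
  simp_rw [gaussianPDFReal_mul_gaussianPDFReal m x _ hv hw, integral_const_mul,
    integral_gaussianPDFReal_eq_one _ hvw, mul_one]

theorem fDiv_gaussianPDFReal_add_var_le {C : ℝ → ℝ} (hC : ConvexOn ℝ (Ioi 0) C) (m₀ m₁ : ℝ)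
    {v w : ℝ≥0} (hv : v ≠ 0) (hw : w ≠ 0)
    (hint : Integrable (fun y ↦ gaussianPDFReal m₀ v y
      * C (gaussianPDFReal m₁ v y / gaussianPDFReal m₀ v y)))
    (hint' : Integrable (fun y ↦ gaussianPDFReal m₀ (v + w) y
      * C (gaussianPDFReal m₁ (v + w) y / gaussianPDFReal m₀ (v + w) y))) :
    fDiv C volume (gaussianPDFReal m₀ (v + w)) (gaussianPDFReal m₁ (v + w))
      ≤ fDiv C volume (gaussianPDFReal m₀ v) (gaussianPDFReal m₁ v) :=
  fDiv_le_of_kernel (k := fun x y ↦ gaussianPDFReal y w x) hC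
    (measurable_uncurry_gaussianPDFReal.comp
      (measurable_snd.prodMk (measurable_const.prodMk measurable_fst)))
    (fun _ _ ↦ gaussianPDFReal_nonneg _ _ _) (fun _ _ ↦ gaussianPDFReal_le_inv_sqrt _ _ _)
    (fun y ↦ integral_gaussianPDFReal_eq_one y hw)
    (gaussianPDFReal_pos _ _ · hv) (gaussianPDFReal_pos _ _ · hv)
    (gaussianPDFReal_pos _ _ · (by positivity)) (gaussianPDFReal_pos _ _ · (by positivity))
    (integrable_gaussianPDFReal _ _) (integrable_gaussianPDFReal _ _)
    (fun x ↦ integral_gaussianPDFReal_mul_gaussianPDFReal m₀ x hv hw)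
    (fun x ↦ integral_gaussianPDFReal_mul_gaussianPDFReal m₁ x hv hw) hint hint'

theorem stmt_16_general (σ σ' m₀ m₁ : ℝ) (hσ : 0 < σ) (hσ' : σ < σ')
    (C : ℝ → ℝ) (hC : ConvexOn ℝ (Set.Ioi (0:ℝ)) C)
    (f : ℝ → ℝ → ℝ → ℝ)
    (hfdef : ∀ m s y, f m s y = (Real.sqrt (2 * π * s^2))⁻¹ *
      Real.exp (-(y - m)^2 / (2 * s^2)))
    (hint : MeasureTheory.Integrable
      (fun y => f m₀ σ y * C (f m₁ σ y / f m₀ σ y)))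
    (hint' : MeasureTheory.Integrable
      (fun y => f m₀ σ' y * C (f m₁ σ' y / f m₀ σ' y))) :
    ∫ y, f m₀ σ' y * C (f m₁ σ' y / f m₀ σ' y) ≤
      ∫ y, f m₀ σ y * C (f m₁ σ y / f m₀ σ y) := by
  have hf : ∀ m s, f m s = gaussianPDFReal m (s ^ 2).toNNReal := fun m s ↦ funext fun y ↦ by
    rw [hfdef, gaussianPDFReal, Real.coe_toNNReal _ (sq_nonneg s)]
  have hvar : (σ' ^ 2).toNNReal = (σ ^ 2).toNNReal + (σ' ^ 2 - σ ^ 2).toNNReal := by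
    rw [← Real.toNNReal_add (sq_nonneg σ) (by nlinarith), add_sub_cancel]
  have hv : (σ ^ 2).toNNReal ≠ 0 := by simpa using hσ.ne'
  have hw : (σ' ^ 2 - σ ^ 2).toNNReal ≠ 0 := by simpa using (by nlinarith : σ ^ 2 < σ' ^ 2)
  simp only [hf, hvar] at hint hint' ⊢
  exact fDiv_gaussianPDFReal_add_var_le hC m₀ m₁ hv hw hint hint'

/-- increasing the common Gaussian variance cannot increase any
Ali-Silvey (f-)divergence between N(m₀,·) and N(m₁,·). -/
theorem stmt_16 (σ σ' m₀ m₁ : ℝ) (hσ : 0 < σ) (hσ' : σ < σ') (hm : m₀ ≠ m₁)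
    (C : ℝ → ℝ) (hC : ConvexOn ℝ (Set.Ioi (0:ℝ)) C)
    (f : ℝ → ℝ → ℝ → ℝ)
    (hfdef : ∀ m s y, f m s y = (Real.sqrt (2 * π * s^2))⁻¹ *
      Real.exp (-(y - m)^2 / (2 * s^2)))
    (hint : MeasureTheory.Integrable
      (fun y => f m₀ σ y * C (f m₁ σ y / f m₀ σ y)))
    (hint' : MeasureTheory.Integrable
      (fun y => f m₀ σ' y * C (f m₁ σ' y / f m₀ σ' y))) :
    ∫ y, f m₀ σ' y * C (f m₁ σ' y / f m₀ σ' y) ≤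
      ∫ y, f m₀ σ y * C (f m₁ σ y / f m₀ σ y) :=
  stmt_16_general σ σ' m₀ m₁ hσ hσ' C hC f hfdef hint hint'
end
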